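/- arXiv:2403.07482 — 2 statements merged into one kernel-verified Lean document; each statement's English description precedes it below -/
import Mathlib

section
/- Let p be a prime, q > 1 a power of p, and K a field containing a primitive q-th root of unity. Let a ∈ K^× and let L be a splitting field of X^q − a over K, so that L/K is a finite Galois extension. Let A be a valuation subring of L, let O = A ∩ K be its restriction to K, and assume that the residue field of O has characteristic different from p. If there exists b ∈ K^× such that a·b^{−q} is a unit of O (i.e., the value of a lies in q times the value group of O), then the inertia subgroup of Gal(L/K) at A is trivial. -/
open Polynomial

/-!
If `σ` lies in the inertia group, write `u = α / b` for a root `α` of `X ^ q - a`; its `q`-th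
power `a / b ^ q` is a unit, so `u` is a unit of `A`. Now `σ u = z u` for a `q`-th root of unity
`z`, and since `σ` acts trivially on the residue field, `z ≡ 1` modulo the maximal ideal of `A`.
If `z ≠ 1` then `z - 1` divides `q`, which is a unit of `A` because the residue characteristic
is not `p`; hence `z = 1`, so `σ` fixes `α`, and `σ = 1` because `L = K(α)`.
-/

open IsLocalRing in
theorem IsLocalRing.isUnit_natCast_of_ringChar_residueField_ne {R : Type*} [CommRing R]
    [IsLocalRing R] {p : ℕ} (hp : p.Prime) (h : ringChar (ResidueField R) ≠ p) :
    IsUnit (p : R) := by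
  by_contra hu
  refine h (CharP.ringChar_of_prime_eq_zero hp ?_)
  rwa [← map_natCast (residue R), residue_eq_zero_iff]

open IsLocalRing in
theorem IsLocalRing.eq_one_of_pow_eq_one_of_sub_one_mem_maximalIdeal {R : Type*} [CommRing R]
    [IsDomain R] [IsLocalRing R] {z : R} {n : ℕ} (hz : z ^ n = 1) (hn : IsUnit (n : R))
    (h : z - 1 ∈ maximalIdeal R) : z = 1 := by
  by_contra hz1
  exact h (isUnit_of_dvd_unit (sub_one_dvd_natCast_of_pow_eq_one hz hz1) hn)

theorem Algebra.adjoin_root_X_pow_sub_C_eq_top {K L : Type*} [Field K] [Field L] [Algebra K L]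
    {n : ℕ} [NeZero n] {ζ : K} (hζ : IsPrimitiveRoot ζ n) {a : K}
    [IsSplittingField K L (X ^ n - C a)] {α : L} (hα : α ^ n = algebraMap K L a) :
    Algebra.adjoin K {α} = ⊤ := by
  refine top_unique ?_
  rw [← IsSplittingField.adjoin_rootSet L (X ^ n - C a), Algebra.adjoin_le_iff]
  intro β hβ
  rw [mem_rootSet_of_ne (X_pow_sub_C_ne_zero (NeZero.pos n) a), map_sub, map_pow, aeval_X,
    aeval_C, sub_eq_zero, ← mem_nthRoots (NeZero.pos n),
    (hζ.map_of_injective (algebraMap K L).injective).nthRoots_eq hα] at hβ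
  obtain ⟨i, -, rfl⟩ := Multiset.mem_map.1 hβ
  rw [← map_pow]
  exact Subalgebra.mul_mem _ (Subalgebra.algebraMap_mem _ _)
    (Algebra.self_mem_adjoin_singleton K α)

namespace ValuationSubring

variable {K L : Type*} [Field K] [Field L] [Algebra K L] (A : ValuationSubring L)

theorem mem_of_pow_mem {x : L} {n : ℕ} (hn : n ≠ 0) (hx : x ^ n ∈ A) : x ∈ A := by
  rw [← valuation_le_one_iff, map_pow] at hx
  exact (valuation_le_one_iff A x).1 ((pow_le_one_iff_of_nonneg zero_le hn).1 hx)

variable {A}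

theorem residue_smul_of_mem_inertiaSubgroup {σ : A.decompositionSubgroup K}
    (hσ : σ ∈ A.inertiaSubgroup K) (x : A) :
    IsLocalRing.residue A (σ • x) = IsLocalRing.residue A x := by
  rw [IsLocalRing.ResidueField.residue_smul]
  exact DFunLike.congr_fun (MonoidHom.mem_ker.1 hσ) _

open IsLocalRing in
theorem apply_eq_self_of_mem_inertiaSubgroup {σ : A.decompositionSubgroup K}
    (hσ : σ ∈ A.inertiaSubgroup K) {n : ℕ} (hn : IsUnit (n : A)) {u : L} (hu : u ∈ A)
    (hu' : u⁻¹ ∈ A) (h : (σ.1 u) ^ n = u ^ n) : σ.1 u = u := by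
  rcases eq_or_ne u 0 with rfl | hu0
  · exact map_zero _
  have hn0 : n ≠ 0 := by rintro rfl; simp at hn
  set z := σ.1 u / u
  have hz : z ^ n = 1 := by rw [div_pow, h, div_self (pow_ne_zero n hu0)]
  have hzA : z ∈ A := mem_of_pow_mem A hn0 (hz ▸ one_mem A)
  let uA : A := ⟨u, hu⟩
  have huA : IsUnit uA := .of_mul_eq_one ⟨u⁻¹, hu'⟩ (Subtype.ext (mul_inv_cancel₀ hu0))
  have hσu : σ • uA = ⟨z, hzA⟩ * uA := Subtype.ext (div_mul_cancel₀ _ hu0).symm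
  have hz1 : (⟨z, hzA⟩ : A) - 1 ∈ maximalIdeal A := by
    have := residue_smul_of_mem_inertiaSubgroup hσ uA
    rw [hσu, map_mul, mul_left_eq_self₀] at this
    rw [← residue_eq_zero_iff, map_sub, map_one, sub_eq_zero]
    exact this.resolve_right ((huA.map (residue A)).ne_zero)
  have := eq_one_of_pow_eq_one_of_sub_one_mem_maximalIdeal (Subtype.ext hz) hn hz1
  exact (div_eq_one_iff_eq hu0).1 (congrArg Subtype.val this)

end ValuationSubring

theorem stmt7_general (p q s : ℕ) (hp : p.Prime) (hqs : q = p ^ s)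
    {K L : Type*} [Field K] [Field L] [Algebra K L]
    (ζ : K) (hζ : IsPrimitiveRoot ζ q)
    (a : K)
    [IsSplittingField K L (X ^ q - C a)]
    (A : ValuationSubring L)
    (hchar : ringChar (IsLocalRing.ResidueField (A.comap (algebraMap K L))) ≠ p)
    (hval : ∃ b : K, b ≠ 0 ∧ a / b ^ q ∈ A.comap (algebraMap K L) ∧
      (a / b ^ q)⁻¹ ∈ A.comap (algebraMap K L)) :
    ValuationSubring.inertiaSubgroup K A = ⊥ := by
  obtain ⟨b, hb, hab, hab'⟩ := hval
  have : NeZero q := ⟨hqs ▸ pow_ne_zero s hp.ne_zero⟩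
  have hqA : IsUnit (q : A) := by
    have hqO := (IsLocalRing.isUnit_natCast_of_ringChar_residueField_ne hp hchar).pow s
    rw [← Nat.cast_pow, ← hqs] at hqO
    simpa using
      hqO.map (RingHom.restrict (algebraMap K L) _ A fun _ ↦ ValuationSubring.mem_comap.1)
  set α := rootOfSplitsXPowSubC (NeZero.pos q) a L
  have hα : α ^ q = algebraMap K L a := rootOfSplitsXPowSubC_pow a L
  set u := α / algebraMap K L b
  have hu : u ^ q = algebraMap K L (a / b ^ q) := by rw [div_pow, hα, map_div₀, map_pow]
  have huA : u ∈ A := A.mem_of_pow_mem (NeZero.ne q) (hu ▸ hab)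
  have huA' : u⁻¹ ∈ A :=
    A.mem_of_pow_mem (NeZero.ne q) (by rw [inv_pow, hu, ← map_inv₀]; exact hab')
  refine (Subgroup.eq_bot_iff_forall _).2 fun σ hσ ↦ ?_
  have hσu : σ.1 u = u := ValuationSubring.apply_eq_self_of_mem_inertiaSubgroup hσ hqA huA huA'
    (by rw [← map_pow, hu, AlgEquiv.commutes])
  have hσα : σ.1 α = α := by
    rwa [map_div₀, AlgEquiv.commutes, div_left_inj' ((_root_.map_ne_zero _).2 hb)] at hσu
  exact Subtype.ext <| AlgEquiv.coe_toAlgHom_injective <| AlgHom.ext_of_adjoin_eq_top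
    (Algebra.adjoin_root_X_pow_sub_C_eq_top hζ hα) (by simpa using hσα)

/-- Let `p` be a prime, `q > 1` a power of `p`, and `K` a field containing a primitive
`q`-th root of unity.  Let `a ∈ K^×`, let `L` be a splitting field of `X^q − a` over `K`,
let `A` be a valuation subring of `L` and `O = A ∩ K` its restriction to `K`, whose
residue field is assumed to have characteristic different from `p`.  If there is
`b ∈ K^×` with `a·b^{−q}` a unit of `O`, then the inertia subgroup of `Gal(L/K)` at `A`
is trivial. -/
theorem stmt7 (p q s : ℕ) (hp : p.Prime) (hqs : q = p ^ s) (hq1 : 1 < q)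
    {K L : Type*} [Field K] [Field L] [Algebra K L]
    (ζ : K) (hζ : IsPrimitiveRoot ζ q)
    (a : K) (ha : a ≠ 0)
    [IsSplittingField K L (X ^ q - C a)]
    (A : ValuationSubring L)
    (hchar : ringChar (IsLocalRing.ResidueField (A.comap (algebraMap K L))) ≠ p)
    (hval : ∃ b : K, b ≠ 0 ∧ a / b ^ q ∈ A.comap (algebraMap K L) ∧
      (a / b ^ q)⁻¹ ∈ A.comap (algebraMap K L)) :
    ValuationSubring.inertiaSubgroup K A = ⊥ :=
  stmt7_general p q s hp hqs ζ hζ a A hchar hval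
end

section
/- Let p be a prime, q > 1 a power of p, and K a field containing a primitive q-th root of unity. Let v : K^× → ℤ be a surjective discrete valuation on K whose residue field has characteristic different from p, and let O be its valuation ring. Let a ∈ K^× with p ∤ v(a) (so that the class of v(a) generates ℤ/q), and let L be a splitting field of X^q − a over K. Then [L : K] = q, and for every valuation subring A of L with A ∩ K = O, the inertia subgroup of Gal(L/K) at A is the whole group Gal(L/K). -/
/-!
Let `α ∈ L` be a root of `X ^ q - a` and `w` the valuation of a valuation subring `A` of `L`
lying over `O`. A monomial `c * α ^ i` with `c ∈ Kˣ`, `i < q` has `q`-th power `c ^ q * a ^ i`,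
whose valuation `q * v c + i * v a` determines its `w`-value. These integers are pairwise
distinct for distinct `i` because `v a` is prime to `q`, so the monomials have pairwise distinct
`w`-values and `w (∑ cᵢ αⁱ)` is the largest of them. Hence membership of `∑ cᵢ αⁱ` in `A` is
decided by the integers `q * v cᵢ + i * v a` alone: `A` is the only valuation subring over `O`,
so it is fixed by `Gal(L/K)`, and every element of `A` is congruent to its constant coefficient
`c₀ ∈ O` modulo the maximal ideal, so `Gal(L/K)` acts trivially on the residue field.
The degree comes from the norm: `N(α) ^ q = a ^ [K(α) : K]` forces `q ∣ [K(α) : K]`.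
-/

open Polynomial

namespace Valuation

variable {R Γ₀ : Type*} [Ring R] [LinearOrderedCommMonoidWithZero Γ₀] (v : Valuation R Γ₀)

theorem map_sum_le_iff_of_pairwise_ne {ι : Type*} {s : Finset ι} {f : ι → R}
    (hf : ∀ i ∈ s, ∀ j ∈ s, i ≠ j → v (f i) ≠ 0 → v (f i) ≠ v (f j)) (g : Γ₀) :
    v (∑ i ∈ s, f i) ≤ g ↔ ∀ i ∈ s, v (f i) ≤ g := by
  classical
  refine ⟨fun hsum i hi => ?_, v.map_sum_le⟩
  obtain ⟨j, hj, hmax⟩ := s.exists_max_image (fun i => v (f i)) ⟨i, hi⟩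
  rcases eq_or_ne (v (f j)) 0 with h0 | h0
  · exact (hmax i hi).trans (h0.trans_le zero_le)
  have hlt : ∀ i ∈ s \ {j}, v (f i) < v (f j) := fun i hi' => by
    obtain ⟨his, hij⟩ := Finset.mem_sdiff.mp hi'
    exact (hmax i his).lt_of_ne fun h =>
      hf j hj i his (Ne.symm (by simpa using hij)) h0 h.symm
  exact (hmax i hi).trans (v.map_sum_eq_of_lt hj hlt ▸ hsum)

end Valuation

namespace ValuationSubring

open scoped Pointwise

variable {K L : Type*} [Field K] [Field L] [Algebra K L]

theorem comap_algEquiv_smul (σ : L ≃ₐ[K] L) (A : ValuationSubring L) :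
    (σ • A).comap (algebraMap K L) = A.comap (algebraMap K L) := by
  ext k
  rw [mem_comap, mem_comap, mem_pointwise_smul_iff_inv_smul_mem, AlgEquiv.smul_def,
    AlgEquiv.commutes]

theorem decompositionSubgroup_eq_top_of_forall_comap_eq (A : ValuationSubring L)
    (h : ∀ B : ValuationSubring L, B.comap (algebraMap K L) = A.comap (algebraMap K L) → B = A) :
    A.decompositionSubgroup K = ⊤ :=
  _root_.eq_top_iff.mpr fun σ _ => MulAction.mem_stabilizer_iff.mpr (h _ (comap_algEquiv_smul σ A))

theorem inertiaSubgroup_eq_top_of_forall_exists_valuation_sub_lt_one (A : ValuationSubring L)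
    (h : ∀ x ∈ A, ∃ k : K, A.valuation (x - algebraMap K L k) < 1) :
    A.inertiaSubgroup K = ⊤ := by
  refine _root_.eq_top_iff.mpr fun σ _ => MonoidHom.mem_ker.mpr (RingEquiv.ext fun r => ?_)
  obtain ⟨x, rfl⟩ := IsLocalRing.residue_surjective r
  obtain ⟨k, hk⟩ := h x x.2
  have hkA : algebraMap K L k ∈ A := by
    simpa using sub_mem x.2 ((valuation_le_one_iff A _).mp hk.le)
  set y : A := ⟨algebraMap K L k, hkA⟩
  have hxy : IsLocalRing.residue A x = IsLocalRing.residue A y :=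
    Ideal.Quotient.eq.mpr ((valuation_lt_one_iff A (x - y)).mpr hk)
  have hσy : σ • y = y := Subtype.ext (σ.1.commutes k)
  change σ • IsLocalRing.residue A x = IsLocalRing.residue A x
  rw [hxy, ← IsLocalRing.ResidueField.residue_smul, hσy]

end ValuationSubring

theorem eq_of_mul_add_mul_eq_mul_add_mul {q i j : ℕ} {x y b : ℤ} (hb : IsCoprime (q : ℤ) b)
    (hi : i < q) (hj : j < q) (h : q * x + i * b = q * y + j * b) : i = j := by
  have hdvd : (q : ℤ) ∣ (i - j : ℤ) :=
    hb.dvd_of_dvd_mul_right ⟨y - x, by linear_combination h⟩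
  have := Int.eq_zero_of_abs_lt_dvd hdvd (abs_sub_lt_iff.mpr ⟨by omega, by omega⟩)
  omega

section Kummer

variable {K L : Type*} [Field K] [Field L] [Algebra K L] {v : K → ℤ}

theorem val_one (hmul : ∀ x y : K, x ≠ 0 → y ≠ 0 → v (x * y) = v x + v y) : v 1 = 0 := by
  simpa using hmul 1 1 one_ne_zero one_ne_zero

theorem val_pow (hmul : ∀ x y : K, x ≠ 0 → y ≠ 0 → v (x * y) = v x + v y) {x : K} (hx : x ≠ 0)
    (n : ℕ) : v (x ^ n) = n * v x := by
  induction n with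
  | zero => simpa using val_one hmul
  | succ n ih => rw [pow_succ, hmul _ _ (pow_ne_zero _ hx) hx, ih]; push_cast; ring

theorem val_pow_mul_pow (hmul : ∀ x y : K, x ≠ 0 → y ≠ 0 → v (x * y) = v x + v y) {c a : K}
    (hc : c ≠ 0) (ha : a ≠ 0) (q i : ℕ) : v (c ^ q * a ^ i) = q * v c + i * v a := by
  rw [hmul _ _ (pow_ne_zero _ hc) (pow_ne_zero _ ha), val_pow hmul hc, val_pow hmul ha]

theorem dvd_finrank_of_pow_eq_algebraMap
    (hmul : ∀ x y : K, x ≠ 0 → y ≠ 0 → v (x * y) = v x + v y) {q : ℕ} (hq : q ≠ 0) {a : K}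
    (ha : a ≠ 0) (hcop : IsCoprime (q : ℤ) (v a)) {x : L} (hx : x ^ q = algebraMap K L a) :
    q ∣ Module.finrank K L := by
  have hN : Algebra.norm K x ^ q = a ^ Module.finrank K L := by
    rw [← map_pow, hx, Algebra.norm_algebraMap]
  have hN0 : Algebra.norm K x ≠ 0 := fun h => pow_ne_zero _ ha (by rw [← hN, h, zero_pow hq])
  have hv := congrArg v hN
  rw [val_pow hmul hN0, val_pow hmul ha] at hv
  exact_mod_cast hcop.dvd_of_dvd_mul_right ⟨v (Algebra.norm K x), hv.symm⟩

theorem irreducible_X_pow_sub_C_of_isCoprime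
    (hmul : ∀ x y : K, x ≠ 0 → y ≠ 0 → v (x * y) = v x + v y) {q : ℕ} (hq : q ≠ 0) {a : K}
    (ha : a ≠ 0) (hcop : IsCoprime (q : ℤ) (v a)) {α : L} (hα : α ^ q = algebraMap K L a) :
    Irreducible (X ^ q - C a) := by
  have hroot : aeval α (X ^ q - C a) = 0 := by simp [hα]
  have hint : IsIntegral K α := ⟨X ^ q - C a, monic_X_pow_sub_C a hq, by simpa using hroot⟩
  have hdeg : q ∣ (minpoly K α).natDegree := by
    rw [← IntermediateField.adjoin.finrank hint]
    exact dvd_finrank_of_pow_eq_algebraMap hmul hq ha hcop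
      (x := IntermediateField.AdjoinSimple.gen K α) (Subtype.ext hα)
  rw [eq_of_monic_of_dvd_of_natDegree_le (minpoly.monic hint) (monic_X_pow_sub_C a hq)
    (minpoly.dvd K α hroot)
    (natDegree_X_pow_sub_C.trans_le (Nat.le_of_dvd (minpoly.natDegree_pos hint) hdeg))]
  exact minpoly.irreducible hint

theorem exists_eq_sum_range_mul_pow {q : ℕ} (hq : q ≠ 0) {a : K} {α : L}
    (hα : α ^ q = algebraMap K L a) (htop : Algebra.adjoin K {α} = ⊤) (x : L) :
    ∃ c : ℕ → K, x = ∑ i ∈ Finset.range q, algebraMap K L (c i) * α ^ i := by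
  obtain ⟨P, rfl⟩ : x ∈ (aeval (R := K) α).range := by
    rw [← Algebra.adjoin_singleton_eq_range_aeval, htop]; trivial
  have hroot : aeval α (X ^ q - C a) = 0 := by simp [hα]
  have hlt : (P %ₘ (X ^ q - C a)).natDegree < q := by
    simpa using natDegree_modByMonic_lt P (monic_X_pow_sub_C a hq)
      fun h => hq (by simpa using congrArg natDegree h)
  refine ⟨(P %ₘ (X ^ q - C a)).coeff, ?_⟩
  change aeval α P = _
  rw [← aeval_modByMonic_eq_self_of_root hroot, aeval_eq_sum_range' hlt]
  simp only [Algebra.smul_def]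

variable {A : ValuationSubring L}

theorem valuation_algebraMap_le_iff (hmul : ∀ x y : K, x ≠ 0 → y ≠ 0 → v (x * y) = v x + v y)
    (hA : ∀ k : K, algebraMap K L k ∈ A ↔ k = 0 ∨ 0 ≤ v k) {k₁ k₂ : K}
    (hk₁ : k₁ ≠ 0) (hk₂ : k₂ ≠ 0) :
    A.valuation (algebraMap K L k₁) ≤ A.valuation (algebraMap K L k₂) ↔ v k₂ ≤ v k₁ := by
  have hv : v k₁ = v (k₁ / k₂) + v k₂ := by
    rw [← hmul _ _ (div_ne_zero hk₁ hk₂) hk₂, div_mul_cancel₀ _ hk₂]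
  rw [← div_le_one₀ (zero_lt_iff.mpr (by simpa using hk₂)), ← Valuation.map_div, ← map_div₀,
    ValuationSubring.valuation_le_one_iff, hA, hv]
  simp [div_ne_zero hk₁ hk₂]

theorem algebraMap_mul_pow_pow {q : ℕ} {a : K} {β : L} (hβ : β ^ q = algebraMap K L a) (c : K)
    (i : ℕ) : (algebraMap K L c * β ^ i) ^ q = algebraMap K L (c ^ q * a ^ i) := by
  rw [mul_pow, pow_right_comm, hβ, map_mul, map_pow, map_pow]

theorem valuation_algebraMap_mul_pow_le_iff
    (hmul : ∀ x y : K, x ≠ 0 → y ≠ 0 → v (x * y) = v x + v y)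
    (hA : ∀ k : K, algebraMap K L k ∈ A ↔ k = 0 ∨ 0 ≤ v k) {q : ℕ}
    (hq : q ≠ 0) {a : K} (ha : a ≠ 0) {β : L} (hβ : β ^ q = algebraMap K L a) {c c' : K}
    (hc : c ≠ 0) (hc' : c' ≠ 0) (i j : ℕ) :
    A.valuation (algebraMap K L c * β ^ i) ≤ A.valuation (algebraMap K L c' * β ^ j) ↔
      q * v c' + j * v a ≤ q * v c + i * v a := by
  rw [← pow_le_pow_iff_left₀ zero_le zero_le hq, ← map_pow, ← map_pow,
    algebraMap_mul_pow_pow hβ, algebraMap_mul_pow_pow hβ,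
    valuation_algebraMap_le_iff hmul hA (by positivity) (by positivity),
    val_pow_mul_pow hmul hc ha, val_pow_mul_pow hmul hc' ha]

theorem valuation_algebraMap_mul_pow_le_one_iff
    (hmul : ∀ x y : K, x ≠ 0 → y ≠ 0 → v (x * y) = v x + v y)
    (hA : ∀ k : K, algebraMap K L k ∈ A ↔ k = 0 ∨ 0 ≤ v k) {q : ℕ}
    (hq : q ≠ 0) {a : K} (ha : a ≠ 0) {β : L} (hβ : β ^ q = algebraMap K L a) {c : K}
    (hc : c ≠ 0) (i : ℕ) :
    A.valuation (algebraMap K L c * β ^ i) ≤ 1 ↔ 0 ≤ q * v c + i * v a := by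
  simpa [val_one hmul] using
    valuation_algebraMap_mul_pow_le_iff hmul hA hq ha hβ hc one_ne_zero i 0

theorem valuation_algebraMap_mul_pow_lt_one_iff
    (hmul : ∀ x y : K, x ≠ 0 → y ≠ 0 → v (x * y) = v x + v y)
    (hA : ∀ k : K, algebraMap K L k ∈ A ↔ k = 0 ∨ 0 ≤ v k) {q : ℕ}
    (hq : q ≠ 0) {a : K} (ha : a ≠ 0) {β : L} (hβ : β ^ q = algebraMap K L a) {c : K}
    (hc : c ≠ 0) (i : ℕ) :
    A.valuation (algebraMap K L c * β ^ i) < 1 ↔ 0 < q * v c + i * v a := by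
  simpa [val_one hmul] using
    (valuation_algebraMap_mul_pow_le_iff hmul hA hq ha hβ one_ne_zero hc 0 i).not

theorem valuation_algebraMap_mul_pow_ne
    (hmul : ∀ x y : K, x ≠ 0 → y ≠ 0 → v (x * y) = v x + v y)
    (hA : ∀ k : K, algebraMap K L k ∈ A ↔ k = 0 ∨ 0 ≤ v k) {q : ℕ} {a : K} (ha : a ≠ 0)
    (hcop : IsCoprime (q : ℤ) (v a)) {β : L} (hβ : β ^ q = algebraMap K L a) {c : K}
    (hc : c ≠ 0) (c' : K) {i j : ℕ} (hi : i < q) (hj : j < q) (hij : i ≠ j) :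
    A.valuation (algebraMap K L c * β ^ i) ≠ A.valuation (algebraMap K L c' * β ^ j) := by
  have hq : q ≠ 0 := by omega
  have hβ0 : β ≠ 0 := by
    rintro rfl
    exact ha (by simpa [zero_pow hq] using hβ.symm)
  intro h
  rcases eq_or_ne c' 0 with rfl | hc'
  · simp [hc, hβ0] at h
  refine hij (eq_of_mul_add_mul_eq_mul_add_mul (x := v c) (y := v c') hcop hi hj
    (le_antisymm ?_ ?_))
  · exact (valuation_algebraMap_mul_pow_le_iff hmul hA hq ha hβ hc' hc j i).mp h.ge
  · exact (valuation_algebraMap_mul_pow_le_iff hmul hA hq ha hβ hc hc' i j).mp h.le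

theorem sum_algebraMap_mul_pow_mem_iff
    (hmul : ∀ x y : K, x ≠ 0 → y ≠ 0 → v (x * y) = v x + v y)
    (hA : ∀ k : K, algebraMap K L k ∈ A ↔ k = 0 ∨ 0 ≤ v k) {q : ℕ} {a : K} (ha : a ≠ 0)
    (hcop : IsCoprime (q : ℤ) (v a)) {β : L} (hβ : β ^ q = algebraMap K L a) (c : ℕ → K) :
    ∑ i ∈ Finset.range q, algebraMap K L (c i) * β ^ i ∈ A ↔
      ∀ i < q, c i ≠ 0 → 0 ≤ q * v (c i) + i * v a := by
  rw [← ValuationSubring.valuation_le_one_iff, Valuation.map_sum_le_iff_of_pairwise_ne]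
  · refine forall_congr' fun i => ?_
    rw [Finset.mem_range]
    refine imp_congr_right fun hi => ?_
    rcases eq_or_ne (c i) 0 with hci | hci
    · simp [hci]
    · rw [imp_iff_right hci]
      exact valuation_algebraMap_mul_pow_le_one_iff hmul hA (by omega) ha hβ hci i
  · intro i hi j hj hij h0
    refine valuation_algebraMap_mul_pow_ne hmul hA ha hcop hβ ?_ _ (Finset.mem_range.mp hi)
      (Finset.mem_range.mp hj) hij
    intro hci
    simp [hci] at h0

theorem valuation_sum_algebraMap_mul_pow_sub_lt_one
    (hmul : ∀ x y : K, x ≠ 0 → y ≠ 0 → v (x * y) = v x + v y)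
    (hA : ∀ k : K, algebraMap K L k ∈ A ↔ k = 0 ∨ 0 ≤ v k) {q : ℕ} (hq : q ≠ 0) {a : K}
    (ha : a ≠ 0) (hcop : IsCoprime (q : ℤ) (v a)) {β : L} (hβ : β ^ q = algebraMap K L a)
    {c : ℕ → K} (hmem : ∑ i ∈ Finset.range q, algebraMap K L (c i) * β ^ i ∈ A) :
    A.valuation (∑ i ∈ Finset.range q, algebraMap K L (c i) * β ^ i - algebraMap K L (c 0)) <
      1 := by
  have hc := (sum_algebraMap_mul_pow_mem_iff hmul hA ha hcop hβ c).mp hmem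
  rw [← Finset.add_sum_erase _ _ (Finset.mem_range.mpr (Nat.pos_of_ne_zero hq)), pow_zero,
    mul_one, add_sub_cancel_left]
  refine Valuation.map_sum_lt _ one_ne_zero fun i hi => ?_
  obtain ⟨hi0, hiq⟩ := Finset.mem_erase.mp hi
  rw [Finset.mem_range] at hiq
  rcases eq_or_ne (c i) 0 with hci | hci
  · simp [hci]
  refine (valuation_algebraMap_mul_pow_lt_one_iff hmul hA hq ha hβ hci i).mpr
    ((hc i hiq hci).lt_of_ne fun h => hi0 ?_)
  exact eq_of_mul_add_mul_eq_mul_add_mul (x := v (c i)) (y := 0) hcop hiq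
    (Nat.pos_of_ne_zero hq) (by simpa using h.symm)

theorem eq_of_forall_algebraMap_mem_iff
    (hmul : ∀ x y : K, x ≠ 0 → y ≠ 0 → v (x * y) = v x + v y) {q : ℕ} (hq : q ≠ 0) {a : K}
    (ha : a ≠ 0) (hcop : IsCoprime (q : ℤ) (v a)) {α : L} (hα : α ^ q = algebraMap K L a)
    (htop : Algebra.adjoin K {α} = ⊤) {B : ValuationSubring L}
    (hA : ∀ k : K, algebraMap K L k ∈ A ↔ k = 0 ∨ 0 ≤ v k)
    (hB : ∀ k : K, algebraMap K L k ∈ B ↔ k = 0 ∨ 0 ≤ v k) : A = B := by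
  ext x
  obtain ⟨c, rfl⟩ := exists_eq_sum_range_mul_pow hq hα htop x
  rw [sum_algebraMap_mul_pow_mem_iff hmul hA ha hcop hα,
    sum_algebraMap_mul_pow_mem_iff hmul hB ha hcop hα]

end Kummer

theorem stmt8_general (p q s : ℕ) (hp : p.Prime) (hqs : q = p ^ s) (hq1 : 1 < q)
    {K : Type*} [Field K] (ζ : K) (hζ : IsPrimitiveRoot ζ q)
    (v : K → ℤ)
    (hmul : ∀ x y : K, x ≠ 0 → y ≠ 0 → v (x * y) = v x + v y)
    (O : ValuationSubring K) (hO : ∀ x : K, x ∈ O ↔ x = 0 ∨ 0 ≤ v x)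
    (a : K) (ha : a ≠ 0) (hpa : ¬ (p : ℤ) ∣ v a)
    {L : Type*} [Field L] [Algebra K L]
    [IsSplittingField K L (X ^ q - C a)] :
    Module.finrank K L = q ∧
      ∀ A : ValuationSubring L, A.comap (algebraMap K L) = O →
        A.decompositionSubgroup K = ⊤ ∧ ValuationSubring.inertiaSubgroup K A = ⊤ := by
  have hq : q ≠ 0 := by omega
  have hcop : IsCoprime (q : ℤ) (v a) := by
    rw [hqs, Nat.cast_pow]
    exact ((Nat.prime_iff_prime_int.mp hp).irreducible.coprime_iff_not_dvd.mpr hpa).pow_left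
  have : NeZero q := ⟨hq⟩
  obtain ⟨α, hα⟩ : ∃ α : L, α ^ q = algebraMap K L a := ⟨_, rootOfSplitsXPowSubC_pow a L⟩
  have hirr := irreducible_X_pow_sub_C_of_isCoprime hmul hq ha hcop hα
  have hζ' : (primitiveRoots q K).Nonempty := ⟨ζ, (mem_primitiveRoots (by omega)).mpr hζ⟩
  have htop := Algebra.adjoin_root_eq_top_of_isSplittingField hζ' hirr hα
  have hO' {A : ValuationSubring L} (hA : A.comap (algebraMap K L) = O) (k : K) :
      algebraMap K L k ∈ A ↔ k = 0 ∨ 0 ≤ v k := by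
    rw [← ValuationSubring.mem_comap, hA, hO]
  refine ⟨finrank_of_isSplittingField_X_pow_sub_C hζ' hirr L, fun A hA => ⟨?_, ?_⟩⟩
  · exact A.decompositionSubgroup_eq_top_of_forall_comap_eq fun B hB =>
      eq_of_forall_algebraMap_mem_iff hmul hq ha hcop hα htop (hO' (hB.trans hA)) (hO' hA)
  · refine A.inertiaSubgroup_eq_top_of_forall_exists_valuation_sub_lt_one fun x hx => ?_
    obtain ⟨c, rfl⟩ := exists_eq_sum_range_mul_pow hq hα htop x
    exact ⟨c 0, valuation_sum_algebraMap_mul_pow_sub_lt_one hmul (hO' hA) hq ha hcop hα hx⟩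

/-- Let `p` be a prime, `q > 1` a power of `p`, and `K` a field containing a primitive
`q`-th root of unity.  Let `v` be a surjective discrete valuation on `K` with valuation
ring `O`, whose residue field has characteristic different from `p`.  Let `a ∈ K^×` with
`p ∤ v(a)`, and let `L` be a splitting field of `X^q − a` over `K`.  Then `[L : K] = q`,
and for every valuation subring `A` of `L` with `A ∩ K = O`, the inertia subgroup of
`Gal(L/K)` at `A` is the whole group `Gal(L/K)`. -/
theorem stmt8 (p q s : ℕ) (hp : p.Prime) (hqs : q = p ^ s) (hq1 : 1 < q)
    {K : Type*} [Field K] (ζ : K) (hζ : IsPrimitiveRoot ζ q)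
    (v : K → ℤ)
    (hmul : ∀ x y : K, x ≠ 0 → y ≠ 0 → v (x * y) = v x + v y)
    (hsurj : ∀ k : ℤ, ∃ x : K, x ≠ 0 ∧ v x = k)
    (hultra : ∀ x y : K, x ≠ 0 → y ≠ 0 → x + y ≠ 0 → min (v x) (v y) ≤ v (x + y))
    (O : ValuationSubring K) (hO : ∀ x : K, x ∈ O ↔ x = 0 ∨ 0 ≤ v x)
    (hchar : ringChar (IsLocalRing.ResidueField O) ≠ p)
    (a : K) (ha : a ≠ 0) (hpa : ¬ (p : ℤ) ∣ v a)
    {L : Type*} [Field L] [Algebra K L]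
    [IsSplittingField K L (X ^ q - C a)] :
    Module.finrank K L = q ∧
      ∀ A : ValuationSubring L, A.comap (algebraMap K L) = O →
        A.decompositionSubgroup K = ⊤ ∧ ValuationSubring.inertiaSubgroup K A = ⊤ :=
  stmt8_general p q s hp hqs hq1 ζ hζ v hmul O hO a ha hpa
end
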